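/- arXiv:1410.0923 — 2 statements merged into one kernel-verified Lean document; each statement's English description precedes it below -/
import Mathlib

section
/- Let T be a connected open surface obtained by removing a finite nonempty configuration of points from a surface (so T is homotopy equivalent to a compact subsurface S' ⊂ T with T − S' nonempty). Let F(T)_• be the semi-simplicial space whose i-simplices are unordered (i+1)-tuples of distinct points of T, with face maps forgetting a point. Then the geometric realisation ‖F(T)_•‖ is contractible. -/
/-! ## Configuration spaces of `ξ`-element subsets ("`ξ`-configuration spaces") -/

/-- The ordered configuration space of points in `S` indexed by `ι`. -/
def OrdConf (ι : Type) (S : Type) [TopologicalSpace S] : Type :=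
  {f : ι → S // Function.Injective f}

instance (ι S : Type) [TopologicalSpace S] : TopologicalSpace (OrdConf ι S) :=
  instTopologicalSpaceSubtype

/-- The subgroup of block-preserving permutations of `Fin n × Fin ξ`: those permutations that
map each block `{i} × Fin ξ` onto some block `{σ i} × Fin ξ`. -/
def blockPerm (n ξ : ℕ) : Subgroup (Equiv.Perm (Fin n × Fin ξ)) where
  carrier := {π | ∃ σ : Equiv.Perm (Fin n), ∀ p, (π p).1 = σ p.1}
  one_mem' := ⟨1, fun _ => rfl⟩
  mul_mem' := by
    rintro a b ⟨σa, ha⟩ ⟨σb, hb⟩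
    exact ⟨σa * σb, fun p => by
      simp only [Equiv.Perm.mul_apply]
      rw [ha, hb]⟩
  inv_mem' := by
    rintro a ⟨σ, h⟩
    refine ⟨σ⁻¹, fun p => ?_⟩
    have := h (a⁻¹ p)
    simp only [← Equiv.Perm.mul_apply, mul_inv_cancel, Equiv.Perm.one_apply] at this
    rw [this, ← Equiv.Perm.mul_apply, inv_mul_cancel, Equiv.Perm.one_apply]

/-- Block-preserving permutations whose induced permutation of the blocks moreover preserves
the set of the first `m` blocks (i.e. respects the partition of the `n` blocks into the first
`m` and the remaining `n - m` ones). -/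
def blockPermPart (n ξ m : ℕ) : Subgroup (Equiv.Perm (Fin n × Fin ξ)) where
  carrier := {π | ∃ σ : Equiv.Perm (Fin n),
    (∀ p, (π p).1 = σ p.1) ∧ ∀ i : Fin n, ((σ i : ℕ) < m ↔ (i : ℕ) < m)}
  one_mem' := ⟨1, fun _ => rfl, fun _ => Iff.rfl⟩
  mul_mem' := by
    rintro a b ⟨σa, ha, ha'⟩ ⟨σb, hb, hb'⟩
    refine ⟨σa * σb, fun p => ?_, fun i => ?_⟩
    · simp only [Equiv.Perm.mul_apply]
      rw [ha, hb]
    · simp only [Equiv.Perm.mul_apply]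
      rw [ha' (σb i), hb' i]
  inv_mem' := by
    rintro a ⟨σ, h, h'⟩
    refine ⟨σ⁻¹, fun p => ?_, fun i => ?_⟩
    · have := h (a⁻¹ p)
      simp only [← Equiv.Perm.mul_apply, mul_inv_cancel, Equiv.Perm.one_apply] at this
      rw [this, ← Equiv.Perm.mul_apply, inv_mul_cancel, Equiv.Perm.one_apply]
    · have := h' (σ⁻¹ i)
      simp only [← Equiv.Perm.mul_apply, mul_inv_cancel, Equiv.Perm.one_apply] at this
      rw [← this]

theorem blockPermPart_le_blockPerm (n ξ m : ℕ) : blockPermPart n ξ m ≤ blockPerm n ξ := by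
  rintro π ⟨σ, h, _⟩; exact ⟨σ, h⟩

/-- The equivalence relation on ordered configurations induced by a subgroup of permutations
of the index set. -/
def confSetoid {ι : Type} (G : Subgroup (Equiv.Perm ι)) (S : Type) [TopologicalSpace S] :
    Setoid (OrdConf ι S) where
  r f g := ∃ π ∈ G, f.1 = g.1 ∘ π
  iseqv := by
    constructor
    · exact fun f => ⟨1, G.one_mem, rfl⟩
    · rintro f g ⟨π, hπ, h⟩
      refine ⟨π⁻¹, G.inv_mem hπ, ?_⟩
      funext x
      have := congrFun h (π⁻¹ x)
      simp only [Function.comp_apply, ← Equiv.Perm.mul_apply, mul_inv_cancel, Equiv.Perm.one_apply] at this ⊢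
      rw [← this]
    · rintro f g h ⟨π, hπ, h1⟩ ⟨ρ, hρ, h2⟩
      refine ⟨ρ * π, G.mul_mem hρ hπ, ?_⟩
      funext x
      simp only [h1, h2, Function.comp_apply, Equiv.Perm.mul_apply]

/-- The `ξ`-configuration space `Conf_n^ξ(S)`: configurations of `n` pairwise disjoint unordered
`ξ`-element subsets of `S`, realised as the quotient of the ordered configuration space of
`n·ξ` points of `S` (indexed by `Fin n × Fin ξ`) by the block-preserving permutations. -/
def ConfXi (S : Type) [TopologicalSpace S] (ξ n : ℕ) : Type :=
  Quotient (confSetoid (blockPerm n ξ) S)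

instance (S : Type) [TopologicalSpace S] (ξ n : ℕ) : TopologicalSpace (ConfXi S ξ n) :=
  instTopologicalSpaceQuotient

/-- The `ξ`-configuration space `Conf_{n,m}^ξ(S)` in which the `n` subsets are moreover
partitioned into a group of `m` subsets and a group of `n - m` subsets. -/
def ConfXiPart (S : Type) [TopologicalSpace S] (ξ n m : ℕ) : Type :=
  Quotient (confSetoid (blockPermPart n ξ m) S)

instance (S : Type) [TopologicalSpace S] (ξ n m : ℕ) : TopologicalSpace (ConfXiPart S ξ n m) :=
  instTopologicalSpaceQuotient

/-- A point of `S` belongs to (one of the subsets of) a `ξ`-configuration. -/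
def memConf {S : Type} [TopologicalSpace S] {ξ n : ℕ} (s : S) (c : ConfXi S ξ n) : Prop :=
  Quotient.lift (fun f : OrdConf (Fin n × Fin ξ) S => ∃ b, f.1 b = s)
    (by
      rintro f g ⟨π, _, h⟩
      simp only [eq_iff_iff]
      constructor
      · rintro ⟨b, hb⟩
        exact ⟨π b, by rw [← hb, h]; rfl⟩
      · rintro ⟨b, hb⟩
        refine ⟨π⁻¹ b, ?_⟩
        rw [← hb, h]
        simp) c

/-- The covering projection `Conf_{n,m}^ξ(S) → Conf_n^ξ(S)` which forgets the partition of the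
`n` subsets into the two groups. -/
def confPartProj (S : Type) [TopologicalSpace S] (ξ n m : ℕ) :
    C(ConfXiPart S ξ n m, ConfXi S ξ n) where
  toFun := Quotient.map' id (by
    rintro f g ⟨π, hπ, h⟩
    exact ⟨π, blockPermPart_le_blockPerm n ξ m hπ, h⟩)
  continuous_toFun := continuous_id.quotient_map' _

/-- Restriction of an ordered configuration to the first `m` blocks. -/
def ordRestrict {S : Type} [TopologicalSpace S] {ξ n : ℕ} (m : ℕ) (h : m ≤ n)
    (f : OrdConf (Fin n × Fin ξ) S) : OrdConf (Fin m × Fin ξ) S :=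
  ⟨fun p => f.1 (⟨(p.1 : ℕ), lt_of_lt_of_le p.1.2 h⟩, p.2), by
    intro p q hpq
    have := f.2 hpq
    have h1 : ((p.1 : ℕ)) = ((q.1 : ℕ)) := congrArg (fun z => ((z.1 : Fin n) : ℕ)) this
    have h2 : p.2 = q.2 := congrArg (fun z : Fin n × Fin ξ => z.2) this
    exact Prod.ext (Fin.ext h1) h2⟩

/-- Inclusion `Fin m × Fin ξ → Fin n × Fin ξ` of the first `m` blocks. -/
def blockEmb {ξ : Type} {n : ℕ} (m : ℕ) (h : m ≤ n) (p : Fin m × ξ) : Fin n × ξ :=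
  (⟨(p.1 : ℕ), lt_of_lt_of_le p.1.2 h⟩, p.2)

theorem blockEmb_injective {ξ : Type} {n m : ℕ} (h : m ≤ n) :
    Function.Injective (blockEmb (ξ := ξ) (n := n) m h) := by
  intro p q hpq
  have h1 : ((p.1 : ℕ)) = ((q.1 : ℕ)) := congrArg (fun z => ((z.1 : Fin n) : ℕ)) hpq
  have h2 : p.2 = q.2 := congrArg (fun z : Fin n × ξ => z.2) hpq
  exact Prod.ext (Fin.ext h1) h2

/-- The map `Conf_{n,m}^ξ(S) → Conf_m^ξ(S)` which forgets the group of the last `n - m`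
subsets, remembering only the distinguished group of `m` subsets. -/
def confPartForget (S : Type) [TopologicalSpace S] (ξ n m : ℕ) (h : m ≤ n) :
    C(ConfXiPart S ξ n m, ConfXi S ξ m) where
  toFun := Quotient.map' (ordRestrict m h) (by
    rintro f g ⟨π, ⟨σ, hσ, hpres⟩, hfg⟩
    have hmap : ∀ p : Fin m × Fin ξ, ((π (blockEmb m h p)).1 : ℕ) < m := by
      intro p
      rw [hσ]
      exact (hpres _).mpr p.1.2
    -- the restriction of `π` to the first `m` blocks, as a permutation
    set e : Fin m × Fin ξ → Fin m × Fin ξ :=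
      fun p => (⟨((π (blockEmb m h p)).1 : ℕ), hmap p⟩, (π (blockEmb m h p)).2) with he
    have hembe : ∀ p, blockEmb m h (e p) = π (blockEmb m h p) := by
      intro p
      apply Prod.ext
      · exact Fin.ext rfl
      · rfl
    have hinj : Function.Injective e := by
      intro p q hpq
      have : π (blockEmb m h p) = π (blockEmb m h q) := by
        rw [← hembe, ← hembe, hpq]
      exact blockEmb_injective h (π.injective this)
    set π' : Equiv.Perm (Fin m × Fin ξ) :=
      Equiv.ofBijective e (Finite.injective_iff_bijective.mp hinj) with hπ'
    have hπ'app : ∀ p, π' p = e p := fun _ => rfl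
    -- the induced permutation of the first `m` block indices
    have hmapσ : ∀ i : Fin m, ((σ ⟨(i : ℕ), lt_of_lt_of_le i.2 h⟩ : Fin n) : ℕ) < m :=
      fun i => (hpres _).mpr i.2
    have hinjσ : Function.Injective
        (fun i : Fin m => (⟨((σ ⟨(i : ℕ), lt_of_lt_of_le i.2 h⟩ : Fin n) : ℕ), hmapσ i⟩ : Fin m)) := by
      intro i j hij
      have hval : ((σ ⟨(i : ℕ), lt_of_lt_of_le i.2 h⟩ : Fin n) : ℕ)
          = ((σ ⟨(j : ℕ), lt_of_lt_of_le j.2 h⟩ : Fin n) : ℕ) :=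
        congrArg (fun z : Fin m => (z : ℕ)) hij
      have := σ.injective (Fin.ext hval)
      exact Fin.ext (congrArg (fun z : Fin n => (z : ℕ)) this)
    refine ⟨π', ⟨Equiv.ofBijective _ (Finite.injective_iff_bijective.mp hinjσ), fun p => ?_⟩, ?_⟩
    · show (e p).1 = _
      apply Fin.ext
      show ((π (blockEmb m h p)).1 : ℕ) = _
      rw [hσ]
      rfl
    · funext p
      show (ordRestrict m h f).1 p = (ordRestrict m h g).1 (π' p)
      show f.1 (blockEmb m h p) = g.1 (blockEmb m h (e p))
      rw [hembe, hfg]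
      rfl)
  continuous_toFun := by
    apply Continuous.quotient_map'
    apply Continuous.subtype_mk
    exact continuous_pi fun p => (continuous_apply _).comp continuous_subtype_val

/-! ## The stabilisation map -/

/-- Stabilisation data for a surface `S`: a self-embedding `e` of `S` that is isotopic to the
identity (through embeddings), together with a `ξ`-element subset `q` of `S` disjoint from the
image of `e`.  When `S` is the interior of a surface with boundary, such data is obtained by
pushing `S` off a collar neighbourhood of a boundary component and placing `q` in the freed-up
collar; the induced map on `ξ`-configuration spaces is the stabilisation map, which "adds `ξ`
trivial strands" on the level of `ξ`-braid groups. -/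
structure StabData (S : Type) [TopologicalSpace S] (ξ : ℕ) where
  /-- the self-embedding of `S` -/
  e : S → S
  emb : Topology.IsEmbedding e
  /-- the added `ξ`-element subset, given as an injective tuple -/
  q : Fin ξ → S
  hq : Function.Injective q
  disj : ∀ (j : Fin ξ) (s : S), q j ≠ e s
  /-- `e` is isotopic to the identity through embeddings -/
  isotopic : ∃ H : C(unitInterval × S, S),
    (∀ t : unitInterval, Topology.IsEmbedding (fun s => H (t, s))) ∧
      (∀ s, H (0, s) = s) ∧ (∀ s, H (1, s) = e s)

/-- The stabilisation map on ordered configurations: apply `e` to the existing points and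
insert the new `ξ`-element subset `q` as the last block. -/
def stabOrd {S : Type} [TopologicalSpace S] {ξ : ℕ} (D : StabData S ξ) (n : ℕ)
    (f : OrdConf (Fin n × Fin ξ) S) : OrdConf (Fin (n + 1) × Fin ξ) S :=
  ⟨fun p => if h : (p.1 : ℕ) < n then D.e (f.1 (⟨(p.1 : ℕ), h⟩, p.2)) else D.q p.2, by
    intro p p' hpp'
    by_cases h : (p.1 : ℕ) < n <;> by_cases h' : (p'.1 : ℕ) < n
    · simp only [dif_pos h, dif_pos h'] at hpp'
      have := f.2 (D.emb.injective hpp')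
      have h1 : ((p.1 : ℕ)) = ((p'.1 : ℕ)) := congrArg (fun z => ((z.1 : Fin n) : ℕ)) this
      have h2 : p.2 = p'.2 := congrArg (fun z : Fin n × Fin ξ => z.2) this
      exact Prod.ext (Fin.ext h1) h2
    · simp only [dif_pos h, dif_neg h'] at hpp'
      exact absurd hpp'.symm (D.disj _ _)
    · simp only [dif_neg h, dif_pos h'] at hpp'
      exact absurd hpp' (D.disj _ _)
    · simp only [dif_neg h, dif_neg h'] at hpp'
      have h2 := D.hq hpp'
      have h1 : ((p.1 : ℕ)) = ((p'.1 : ℕ)) := by omega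
      exact Prod.ext (Fin.ext h1) h2⟩

/-- The stabilisation map `Conf_n^ξ(S) → Conf_{n+1}^ξ(S)` induced by stabilisation data. -/
def stabMap {S : Type} [TopologicalSpace S] {ξ : ℕ} (D : StabData S ξ) (n : ℕ) :
    C(ConfXi S ξ n, ConfXi S ξ (n + 1)) where
  toFun := Quotient.map' (stabOrd D n) (by
    rintro f g ⟨π, ⟨σ, hσ⟩, hfg⟩
    -- extend `π` to `Fin (n+1) × Fin ξ` by the identity on the last block
    set eπ : Fin (n + 1) × Fin ξ → Fin (n + 1) × Fin ξ := fun p =>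
      if h : (p.1 : ℕ) < n then
        (⟨((π (⟨(p.1 : ℕ), h⟩, p.2)).1 : ℕ), lt_trans (π (⟨(p.1 : ℕ), h⟩, p.2)).1.2 (Nat.lt_succ_self n)⟩,
          (π (⟨(p.1 : ℕ), h⟩, p.2)).2)
      else p with heπ
    have hlt : ∀ (p : Fin (n+1) × Fin ξ) (h : (p.1 : ℕ) < n), ((eπ p).1 : ℕ) < n := by
      intro p h
      simp only [heπ, dif_pos h]
      exact (π (⟨(p.1 : ℕ), h⟩, p.2)).1.2
    have hge : ∀ (p : Fin (n+1) × Fin ξ), ¬ (p.1 : ℕ) < n → eπ p = p := by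
      intro p h
      simp only [heπ, dif_neg h]
    have hinj : Function.Injective eπ := by
      intro p p' hpp'
      by_cases h : (p.1 : ℕ) < n <;> by_cases h' : (p'.1 : ℕ) < n
      · have e1 : eπ p = (⟨((π (⟨(p.1 : ℕ), h⟩, p.2)).1 : ℕ), _⟩, (π (⟨(p.1 : ℕ), h⟩, p.2)).2) :=
          dif_pos h
        have e2 : eπ p' = (⟨((π (⟨(p'.1 : ℕ), h'⟩, p'.2)).1 : ℕ), _⟩, (π (⟨(p'.1 : ℕ), h'⟩, p'.2)).2) :=
          dif_pos h'
        rw [e1, e2] at hpp'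
        have hv1 : ((π (⟨(p.1 : ℕ), h⟩, p.2)).1 : ℕ) = ((π (⟨(p'.1 : ℕ), h'⟩, p'.2)).1 : ℕ) :=
          congrArg (fun z => ((z.1 : Fin (n+1)) : ℕ)) hpp'
        have hv2 : (π (⟨(p.1 : ℕ), h⟩, p.2)).2 = (π (⟨(p'.1 : ℕ), h'⟩, p'.2)).2 :=
          congrArg (fun z : Fin (n+1) × Fin ξ => z.2) hpp'
        have : π (⟨(p.1 : ℕ), h⟩, p.2) = π (⟨(p'.1 : ℕ), h'⟩, p'.2) :=
          Prod.ext (Fin.ext hv1) hv2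
        have := π.injective this
        have h1 : ((p.1 : ℕ)) = ((p'.1 : ℕ)) := congrArg (fun z => ((z.1 : Fin n) : ℕ)) this
        have h2 : p.2 = p'.2 := congrArg (fun z : Fin n × Fin ξ => z.2) this
        exact Prod.ext (Fin.ext h1) h2
      · exfalso
        have := hlt p h
        rw [hpp', hge p' h'] at this
        exact h' this
      · exfalso
        have := hlt p' h'
        rw [← hpp', hge p h] at this
        exact h this
      · rw [hge p h, hge p' h'] at hpp'
        exact hpp'
    set π' : Equiv.Perm (Fin (n+1) × Fin ξ) :=
      Equiv.ofBijective eπ (Finite.injective_iff_bijective.mp hinj) with hπ'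
    -- the induced permutation of the `n+1` block indices
    set eσ : Fin (n + 1) → Fin (n + 1) := fun i =>
      if h : (i : ℕ) < n then ⟨((σ ⟨(i : ℕ), h⟩ : Fin n) : ℕ), lt_trans (σ ⟨(i : ℕ), h⟩).2 (Nat.lt_succ_self n)⟩
      else i with heσ
    have hinjσ : Function.Injective eσ := by
      intro i j hij
      by_cases h : (i : ℕ) < n <;> by_cases h' : (j : ℕ) < n
      · have e1 : eσ i = ⟨((σ ⟨(i : ℕ), h⟩ : Fin n) : ℕ), _⟩ := dif_pos h
        have e2 : eσ j = ⟨((σ ⟨(j : ℕ), h'⟩ : Fin n) : ℕ), _⟩ := dif_pos h'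
        rw [e1, e2] at hij
        have := σ.injective (Fin.ext (congrArg (fun z : Fin (n+1) => (z : ℕ)) hij))
        exact Fin.ext (congrArg (fun z : Fin n => (z : ℕ)) this)
      · exfalso
        have e1 : eσ i = ⟨((σ ⟨(i : ℕ), h⟩ : Fin n) : ℕ), _⟩ := dif_pos h
        have e2 : eσ j = j := dif_neg h'
        rw [e1, e2] at hij
        have : ((σ ⟨(i : ℕ), h⟩ : Fin n) : ℕ) < n := (σ _).2
        rw [show ((σ ⟨(i : ℕ), h⟩ : Fin n) : ℕ) = (j : ℕ) from congrArg Fin.val hij] at this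
        exact h' this
      · exfalso
        have e1 : eσ i = i := dif_neg h
        have e2 : eσ j = ⟨((σ ⟨(j : ℕ), h'⟩ : Fin n) : ℕ), _⟩ := dif_pos h'
        rw [e1, e2] at hij
        have : ((σ ⟨(j : ℕ), h'⟩ : Fin n) : ℕ) < n := (σ _).2
        rw [show ((σ ⟨(j : ℕ), h'⟩ : Fin n) : ℕ) = (i : ℕ) from (congrArg Fin.val hij).symm] at this
        exact h this
      · have e1 : eσ i = i := dif_neg h
        have e2 : eσ j = j := dif_neg h'
        rw [e1, e2] at hij
        exact hij
    refine ⟨π', ⟨Equiv.ofBijective eσ (Finite.injective_iff_bijective.mp hinjσ), fun p => ?_⟩, ?_⟩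
    · show (eπ p).1 = eσ p.1
      by_cases h : (p.1 : ℕ) < n
      · have e1 : eπ p = (⟨((π (⟨(p.1 : ℕ), h⟩, p.2)).1 : ℕ), _⟩, (π (⟨(p.1 : ℕ), h⟩, p.2)).2) :=
          dif_pos h
        have e2 : eσ p.1 = ⟨((σ ⟨(p.1 : ℕ), h⟩ : Fin n) : ℕ), _⟩ := dif_pos h
        rw [e1, e2]
        exact Fin.ext (congrArg Fin.val (by rw [hσ]))
      · rw [hge p h, heσ]
        simp only [dif_neg h]
    · funext p
      show (stabOrd D n f).1 p = (stabOrd D n g).1 (eπ p)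
      by_cases h : (p.1 : ℕ) < n
      · have e1 : eπ p = (⟨((π (⟨(p.1 : ℕ), h⟩, p.2)).1 : ℕ), _⟩, (π (⟨(p.1 : ℕ), h⟩, p.2)).2) :=
          dif_pos h
        have hlt' : ((eπ p).1 : ℕ) < n := hlt p h
        show (if h : (p.1 : ℕ) < n then D.e (f.1 (⟨(p.1 : ℕ), h⟩, p.2)) else D.q p.2)
          = (if h : ((eπ p).1 : ℕ) < n then D.e (g.1 (⟨((eπ p).1 : ℕ), h⟩, (eπ p).2)) else D.q (eπ p).2)
        rw [dif_pos h, dif_pos hlt']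
        congr 1
        have : f.1 (⟨(p.1 : ℕ), h⟩, p.2) = g.1 (π (⟨(p.1 : ℕ), h⟩, p.2)) := by
          rw [hfg]; rfl
        rw [this]
        have heq : ((⟨((eπ p).1 : ℕ), hlt'⟩, (eπ p).2) : Fin n × Fin ξ)
            = π (⟨(p.1 : ℕ), h⟩, p.2) := by
          apply Prod.ext
          · exact Fin.ext (congrArg (fun z : Fin (n+1) × Fin ξ => ((z.1 : Fin (n+1)) : ℕ)) e1)
          · exact congrArg (fun z : Fin (n+1) × Fin ξ => z.2) e1
        rw [heq]
      · rw [hge p h]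
        show (if h : (p.1 : ℕ) < n then D.e (f.1 (⟨(p.1 : ℕ), h⟩, p.2)) else D.q p.2)
          = (if h : (p.1 : ℕ) < n then D.e (g.1 (⟨(p.1 : ℕ), h⟩, p.2)) else D.q p.2)
        rw [dif_neg h, dif_neg h])
  continuous_toFun := by
    apply Continuous.quotient_map'
    apply Continuous.subtype_mk
    apply continuous_pi
    intro p
    by_cases h : (p.1 : ℕ) < n
    · simp only [stabOrd, dif_pos h]
      exact D.emb.continuous.comp ((continuous_apply _).comp continuous_subtype_val)
    · simp only [stabOrd, dif_neg h]
      exact continuous_const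

/-! ## Semi-simplicial spaces and their (fat) geometric realisation -/

open CategoryTheory

/-- A semi-simplicial space: a family of spaces `X n` (the `n`-simplices) with contravariant
functorial action of strictly monotone maps (order embeddings) `Fin (m+1) ↪o Fin (n+1)`;
the face maps are the actions of the coface embeddings `Fin.succAboveOrderEmb`. -/
structure SemiSimplicialSpace where
  /-- the space of `n`-simplices -/
  obj : ℕ → TopCat
  /-- the contravariant action of order embeddings (generated by the face maps) -/
  map : ∀ {m n : ℕ}, (Fin (m + 1) ↪o Fin (n + 1)) → C(obj n, obj m)
  map_id : ∀ (n : ℕ) (x : obj n), map ((OrderIso.refl (Fin (n + 1))).toOrderEmbedding) x = x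
  map_comp : ∀ {m n k : ℕ} (f : Fin (m + 1) ↪o Fin (n + 1)) (g : Fin (n + 1) ↪o Fin (k + 1))
    (x : obj k), map (f.trans g) x = map f (map g x)

/-- The `i`-th face map of a semi-simplicial space. -/
def SemiSimplicialSpace.face (X : SemiSimplicialSpace) {n : ℕ} (i : Fin (n + 2)) :
    C(X.obj (n + 1), X.obj n) :=
  X.map (Fin.succAboveOrderEmb i)

/-- The standard topological `n`-simplex. -/
def TopSimplex (n : ℕ) : Type :=
  {t : Fin (n + 1) → ℝ // (∀ i, 0 ≤ t i) ∧ ∑ i, t i = 1}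

instance (n : ℕ) : TopologicalSpace (TopSimplex n) := instTopologicalSpaceSubtype

/-- Pushforward of a point of the `m`-simplex along an order embedding (the affine map
induced by the corresponding inclusion of vertices). -/
def TopSimplex.push {m n : ℕ} (f : Fin (m + 1) ↪o Fin (n + 1)) (t : TopSimplex m) :
    TopSimplex n :=
  ⟨fun j => ∑ i : Fin (m + 1), if f i = j then t.1 i else 0, by
    constructor
    · intro j
      apply Finset.sum_nonneg
      intro i _
      split
      · exact t.2.1 i
      · exact le_refl 0
    · rw [Finset.sum_comm]
      simp only [Finset.sum_ite_eq, Finset.mem_univ, if_true]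
      exact t.2.2⟩

/-- The total space (before quotienting) of the geometric realisation. -/
abbrev SemiSimplicialSpace.Total (X : SemiSimplicialSpace) : Type :=
  Sigma (fun n : ℕ => (↥(X.obj n) × TopSimplex n))

/-- The realisation relation: `(m, X(f) x, t) ∼ (n, x, f_* t)` for all order embeddings. -/
def SemiSimplicialSpace.Rel (X : SemiSimplicialSpace) : X.Total → X.Total → Prop :=
  fun a b => ∃ (m n : ℕ) (f : Fin (m + 1) ↪o Fin (n + 1)) (x : X.obj n) (t : TopSimplex m),
    a = ⟨m, (X.map f x, t)⟩ ∧ b = ⟨n, (x, TopSimplex.push f t)⟩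

/-- The (fat) geometric realisation of a semi-simplicial space. -/
def SemiSimplicialSpace.Realization (X : SemiSimplicialSpace) : Type :=
  Quot X.Rel

instance (X : SemiSimplicialSpace) : TopologicalSpace X.Realization :=
  instTopologicalSpaceQuot

/-- A map of semi-simplicial spaces: levelwise maps commuting with the structure maps. -/
structure SemiSimplicialMap (X Y : SemiSimplicialSpace) where
  app : ∀ n, C(X.obj n, Y.obj n)
  naturality : ∀ {m n : ℕ} (f : Fin (m + 1) ↪o Fin (n + 1)) (x : X.obj n),
    app m (X.map f x) = Y.map f (app n x)

/-- The map induced on geometric realisations by a map of semi-simplicial spaces. -/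
def SemiSimplicialMap.realize {X Y : SemiSimplicialSpace} (φ : SemiSimplicialMap X Y) :
    C(X.Realization, Y.Realization) where
  toFun := Quot.lift (fun a => Quot.mk Y.Rel ⟨a.1, (φ.app a.1 a.2.1, a.2.2)⟩) (by
    rintro a b ⟨m, n, f, x, t, rfl, rfl⟩
    apply Quot.sound
    refine ⟨m, n, f, φ.app n x, t, ?_, rfl⟩
    rw [φ.naturality f x])
  continuous_toFun := by
    apply continuous_quot_lift
    apply continuous_sigma
    intro n
    have hmk : Continuous (@Sigma.mk ℕ (fun k => (↥(Y.obj k) × TopSimplex k)) n) :=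
      continuous_sigmaMk
    exact (continuous_quot_mk.comp
      (hmk.comp (((φ.app n).continuous.comp continuous_fst).prodMk continuous_snd)))

/-- An augmented semi-simplicial space: a semi-simplicial space with compatible maps to a
base space `B`; `aug n : X n → B` is the unique composite of face maps and the
augmentation map. -/
structure AugmentedSemiSimplicialSpace extends SemiSimplicialSpace where
  B : TopCat
  aug : ∀ n, C(obj n, B)
  aug_compat : ∀ {m n : ℕ} (f : Fin (m + 1) ↪o Fin (n + 1)) (x : obj n),
    aug m (map f x) = aug n x

/-- The realisation of the augmentation: the canonical map `‖X_•‖ → B`. -/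
def AugmentedSemiSimplicialSpace.augRealize (X : AugmentedSemiSimplicialSpace) :
    C(X.Realization, X.B) where
  toFun := Quot.lift (fun a => X.aug a.1 a.2.1) (by
    rintro a b ⟨m, n, f, x, t, rfl, rfl⟩
    exact X.aug_compat f x)
  continuous_toFun := by
    apply continuous_quot_lift
    apply continuous_sigma
    intro n
    exact (X.aug n).continuous.comp continuous_fst

/-- The semi-simplicial space `F(T)_•` whose `i`-simplices are configurations of `i+1`
distinct points of `T` (tuples of distinct points; forgetting one of the points gives the
face maps — we use labelled tuples so that "forget the `j`-th point" is well defined). -/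
def confResolution (T : Type) [TopologicalSpace T] : SemiSimplicialSpace where
  obj i := TopCat.of (OrdConf (Fin (i + 1)) T)
  map f := ⟨fun z => ⟨z.1 ∘ f, fun a b hab => f.injective (z.2 hab)⟩, by
    apply Continuous.subtype_mk
    exact continuous_pi fun j => (continuous_apply _).comp continuous_subtype_val⟩
  map_id := fun n z => Subtype.ext rfl
  map_comp := fun f g z => Subtype.ext rfl

/-! An isotopy of `T` through injective maps, from the identity to a map `f` missing a point `q`,
contracts `‖F(T)‖`: it deforms `‖F(T)‖` into the image of `f`, and there one can cone off to the
vertex `{q}`, because `q` can be added to every configuration in the image of `f`. For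
`T = S - A` such an isotopy pushes a small punctured disc around a point of `A` radially
outwards. -/

open Function Set

namespace SemiSimplicialSpace

variable (X : SemiSimplicialSpace)

def realizationMk (n : ℕ) (x : X.obj n) (t : TopSimplex n) : X.Realization :=
  Quot.mk _ ⟨n, (x, t)⟩

theorem realizationMk_map {m n : ℕ} (f : Fin (m + 1) ↪o Fin (n + 1)) (x : X.obj n)
    (t : TopSimplex m) : X.realizationMk m (X.map f x) t = X.realizationMk n x (t.push f) :=
  Quot.sound ⟨m, n, f, x, t, rfl, rfl⟩

theorem continuous_realizationMk (n : ℕ) :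
    Continuous fun p : X.obj n × TopSimplex n => X.realizationMk n p.1 p.2 :=
  continuous_quot_mk.comp (continuous_sigmaMk (σ := fun n => X.obj n × TopSimplex n))

variable {X}

theorem realization_ind {P : X.Realization → Prop} (h : ∀ n x t, P (X.realizationMk n x t))
    (y : X.Realization) : P y :=
  Quot.ind (fun a => h a.1 a.2.1 a.2.2) y

variable {Y Z : Type*} [TopologicalSpace Y] [LocallyCompactSpace Y] [TopologicalSpace Z]

/-- Local compactness of `Y` is what makes `Y × ‖X‖` a quotient of `Y × X.Total`. -/
def prodLift (F : ∀ n, C(Y × (X.obj n × TopSimplex n), Z))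
    (hF : ∀ {m n : ℕ} (f : Fin (m + 1) ↪o Fin (n + 1)) (x : X.obj n) (t : TopSimplex m) (y : Y),
      F m (y, (X.map f x, t)) = F n (y, (x, t.push f))) :
    C(Y × X.Realization, Z) where
  toFun p := Quot.lift (fun a : X.Total => F a.1 (p.1, a.2))
    (by rintro _ _ ⟨m, n, f, x, t, rfl, rfl⟩; exact hF f x t p.1) p.2
  continuous_toFun := by
    refine isQuotientMap_quot_mk.continuous_lift_prod_right ?_
    have hF' : Continuous fun a : (Σ n, X.obj n × TopSimplex n) × Y => F a.1.1 (a.2, a.1.2) :=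
      Continuous.comp (g := fun b : Σ n, (X.obj n × TopSimplex n) × Y => F b.1 (b.2.2, b.2.1))
        (continuous_sigma fun n => (F n).continuous.comp continuous_swap)
        Homeomorph.sigmaProdDistrib.continuous
    exact hF'.comp continuous_swap

end SemiSimplicialSpace

def Fin.coneOrderEmb {m n : ℕ} (f : Fin (m + 1) ↪o Fin (n + 1)) : Fin (m + 2) ↪o Fin (n + 2) :=
  .ofStrictMono (Fin.cons 0 (Fin.succ ∘ f))
    ((Fin.strictMono_succ.comp f.strictMono).vecCons (Fin.succ_pos _))

@[simp]
theorem Fin.coneOrderEmb_zero {m n : ℕ} (f : Fin (m + 1) ↪o Fin (n + 1)) :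
    Fin.coneOrderEmb f 0 = 0 :=
  rfl

@[simp]
theorem Fin.coneOrderEmb_succ {m n : ℕ} (f : Fin (m + 1) ↪o Fin (n + 1)) (i : Fin (m + 1)) :
    Fin.coneOrderEmb f i.succ = (f i).succ :=
  rfl

def Fin.apexOrderEmb (n : ℕ) : Fin 1 ↪o Fin (n + 2) :=
  .ofStrictMono (fun _ => 0) (Subsingleton.strictMono _)

@[simp]
theorem Fin.apexOrderEmb_apply (n : ℕ) (i : Fin 1) : Fin.apexOrderEmb n i = 0 :=
  rfl

namespace TopSimplex

@[ext]
theorem ext {n : ℕ} {u v : TopSimplex n} (h : ∀ i, u.1 i = v.1 i) : u = v :=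
  Subtype.ext (funext h)

instance : Inhabited (TopSimplex 0) :=
  ⟨⟨fun _ => 1, fun _ => zero_le_one, by simp⟩⟩

theorem default_val : (default : TopSimplex 0).1 = fun _ => 1 :=
  rfl

def cone {n : ℕ} (s : unitInterval) (u : TopSimplex n) : TopSimplex (n + 1) :=
  ⟨Fin.cons (s : ℝ) fun i => (1 - s) * u.1 i, by
    refine ⟨Fin.cases s.2.1 fun i => mul_nonneg (unitInterval.one_minus_nonneg s) (u.2.1 i), ?_⟩
    rw [Fin.sum_univ_succ]
    simp only [Fin.cons_zero, Fin.cons_succ, ← Finset.mul_sum, u.2.2]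
    ring⟩

theorem continuous_cone (n : ℕ) :
    Continuous fun p : unitInterval × TopSimplex n => p.2.cone p.1 := by
  refine (continuous_pi fun i => ?_).subtype_mk _
  induction i using Fin.cases with
  | zero => exact continuous_subtype_val.comp continuous_fst
  | succ i =>
    exact (continuous_const.sub (continuous_subtype_val.comp continuous_fst)).mul
      ((continuous_apply i).comp (continuous_subtype_val.comp continuous_snd))

theorem push_apply {m n : ℕ} (f : Fin (m + 1) ↪o Fin (n + 1)) (u : TopSimplex m)
    (j : Fin (n + 1)) : (u.push f).1 j = ∑ i, if f i = j then u.1 i else 0 :=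
  rfl

theorem push_coneOrderEmb_cone {m n : ℕ} (f : Fin (m + 1) ↪o Fin (n + 1)) (s : unitInterval)
    (u : TopSimplex m) : (u.cone s).push (Fin.coneOrderEmb f) = (u.push f).cone s := by
  ext j
  rw [push_apply, Fin.sum_univ_succ]
  induction j using Fin.cases
  · simp [cone]
  · simp [cone, push_apply, Finset.mul_sum, (Fin.succ_ne_zero _).symm]

theorem push_succOrderEmb {n : ℕ} (u : TopSimplex n) :
    u.push (Fin.succOrderEmb _) = u.cone 0 := by
  ext j
  rw [push_apply]
  induction j using Fin.cases <;> simp [cone, Fin.succ_ne_zero]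

theorem push_default_apexOrderEmb {n : ℕ} (u : TopSimplex n) :
    (default : TopSimplex 0).push (Fin.apexOrderEmb n) = u.cone 1 := by
  ext j
  rw [push_apply, Fin.sum_univ_one, Fin.apexOrderEmb_apply, default_val]
  induction j using Fin.cases
  · simp [cone]
  · simp [cone, (Fin.succ_ne_zero _).symm]

end TopSimplex

namespace OrdConf

variable {ι T T' : Type} [TopologicalSpace T] [TopologicalSpace T']

def map (g : T → T') (hg : Injective g) (z : OrdConf ι T) : OrdConf ι T' :=
  ⟨g ∘ z.1, hg.comp z.2⟩

theorem continuous_map (g : C(T, T')) (hg : Injective g) : Continuous (map (ι := ι) g hg) :=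
  (continuous_pi fun i => g.continuous.comp ((continuous_apply i).comp
    continuous_subtype_val)).subtype_mk _

theorem continuous_uncurry_map {Y : Type*} [TopologicalSpace Y] (H : C(Y × T, T'))
    (hH : ∀ y, Injective fun x => H (y, x)) :
    Continuous fun p : Y × OrdConf ι T => p.2.map _ (hH p.1) :=
  (continuous_pi fun i => H.continuous.comp
    (continuous_fst.prodMk ((continuous_apply i).comp (continuous_subtype_val.comp
      continuous_snd)))).subtype_mk _

theorem map_congr {g g' : T → T'} (hg : Injective g) (hg' : Injective g') (h : ∀ x, g x = g' x)
    (z : OrdConf ι T) : z.map g hg = z.map g' hg' := by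
  obtain rfl : g = g' := funext h
  rfl

def single (q : T) : OrdConf (Fin 1) T :=
  ⟨fun _ => q, fun i j _ => Subsingleton.elim i j⟩

def cone {n : ℕ} (g : T → T') (hg : Injective g) {q : T'} (hq : q ∉ range g)
    (z : OrdConf (Fin n) T) : OrdConf (Fin (n + 1)) T' :=
  ⟨Fin.cons q (g ∘ z.1),
    Fin.cons_injective_of_injective (fun ⟨i, hi⟩ => hq ⟨z.1 i, hi⟩) (hg.comp z.2)⟩

theorem continuous_cone {n : ℕ} (g : C(T, T')) (hg : Injective g) {q : T'} (hq : q ∉ range g) :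
    Continuous (cone (n := n) g hg hq) := by
  refine (continuous_pi fun i => ?_).subtype_mk _
  induction i using Fin.cases with
  | zero => exact continuous_const
  | succ i => exact g.continuous.comp ((continuous_apply i).comp continuous_subtype_val)

end OrdConf

section confResolution

variable {T T' : Type} [TopologicalSpace T] [TopologicalSpace T']

def confResolutionMap (g : C(T, T')) (hg : Injective g) :
    SemiSimplicialMap (confResolution T) (confResolution T') where
  app _ := ⟨OrdConf.map g hg, OrdConf.continuous_map g hg⟩
  naturality _ _ := rfl

theorem realize_confResolutionMap_id :
    (confResolutionMap (ContinuousMap.id T) injective_id).realize = ContinuousMap.id _ := by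
  ext y
  induction y using SemiSimplicialSpace.realization_ind
  rfl

theorem homotopic_realize_confResolutionMap {g₀ g₁ : C(T, T')} (hg₀ : Injective g₀)
    (hg₁ : Injective g₁) (h : g₀.HomotopicWith g₁ fun g => Injective g) :
    (confResolutionMap g₀ hg₀).realize.Homotopic (confResolutionMap g₁ hg₁).realize := by
  obtain ⟨F⟩ := h
  let G n : C(unitInterval × (OrdConf (Fin (n + 1)) T × TopSimplex n),
      (confResolution T').Realization) :=
    ⟨fun p => (confResolution T').realizationMk n (p.2.1.map _ (F.prop p.1)) p.2.2,
      ((confResolution T').continuous_realizationMk n).comp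
        (((OrdConf.continuous_uncurry_map F.toContinuousMap F.prop).comp
          (continuous_fst.prodMk (continuous_fst.comp continuous_snd))).prodMk
            (continuous_snd.comp continuous_snd))⟩
  refine ⟨{ toContinuousMap := SemiSimplicialSpace.prodLift G fun f x t s => ?_,
            map_zero_left := SemiSimplicialSpace.realization_ind fun n x t => ?_,
            map_one_left := SemiSimplicialSpace.realization_ind fun n x t => ?_ }⟩
  · exact (confResolution T').realizationMk_map f (x.map _ (F.prop s)) t
  · exact congrArg ((confResolution T').realizationMk n · t)
      (OrdConf.map_congr _ hg₀ F.apply_zero x)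
  · exact congrArg ((confResolution T').realizationMk n · t)
      (OrdConf.map_congr _ hg₁ F.apply_one x)

variable (g : C(T, T')) (hg : Injective g) {q : T'}

theorem confResolution_map_coneOrderEmb_cone {m n : ℕ} (f : Fin (m + 1) ↪o Fin (n + 1))
    (hq : q ∉ range g) (z : OrdConf (Fin (n + 1)) T) :
    (confResolution T').map (Fin.coneOrderEmb f) (z.cone g hg hq) =
      ((confResolution T).map f z).cone g hg hq := by
  refine Subtype.ext (funext fun i => ?_)
  induction i using Fin.cases <;> rfl

theorem realizationMk_cone_map {m n : ℕ} (hq : q ∉ range g) (f : Fin (m + 1) ↪o Fin (n + 1))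
    (x : OrdConf (Fin (n + 1)) T) (t : TopSimplex m) (s : unitInterval) :
    (confResolution T').realizationMk (m + 1) (((confResolution T).map f x).cone g hg hq)
        (t.cone s) =
      (confResolution T').realizationMk (n + 1) (x.cone g hg hq) ((t.push f).cone s) := by
  rw [← TopSimplex.push_coneOrderEmb_cone, ← confResolution_map_coneOrderEmb_cone g hg f hq x]
  exact (confResolution T').realizationMk_map (Fin.coneOrderEmb f) _ _

theorem realizationMk_cone_zero {n : ℕ} (hq : q ∉ range g) (x : OrdConf (Fin (n + 1)) T)
    (t : TopSimplex n) :
    (confResolution T').realizationMk (n + 1) (x.cone g hg hq) (t.cone 0) =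
      (confResolution T').realizationMk n (x.map g hg) t := by
  rw [← TopSimplex.push_succOrderEmb]
  exact ((confResolution T').realizationMk_map (Fin.succOrderEmb _) (x.cone g hg hq) t).symm

theorem realizationMk_cone_one {n : ℕ} (hq : q ∉ range g) (x : OrdConf (Fin (n + 1)) T)
    (t : TopSimplex n) :
    (confResolution T').realizationMk (n + 1) (x.cone g hg hq) (t.cone 1) =
      (confResolution T').realizationMk 0 (OrdConf.single q) default := by
  rw [← TopSimplex.push_default_apexOrderEmb t]
  exact ((confResolution T').realizationMk_map (Fin.apexOrderEmb n) (x.cone g hg hq) _).symm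

theorem nullhomotopic_realize_confResolutionMap (hq : q ∉ range g) :
    (confResolutionMap g hg).realize.Nullhomotopic := by
  let G n : C(unitInterval × (OrdConf (Fin (n + 1)) T × TopSimplex n),
      (confResolution T').Realization) :=
    ⟨fun p => (confResolution T').realizationMk (n + 1) (p.2.1.cone g hg hq) (p.2.2.cone p.1),
      ((confResolution T').continuous_realizationMk (n + 1)).comp
        (((OrdConf.continuous_cone g hg hq).comp (continuous_fst.comp continuous_snd)).prodMk
          ((TopSimplex.continuous_cone n).comp
            (continuous_fst.prodMk (continuous_snd.comp continuous_snd))))⟩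
  refine ⟨(confResolution T').realizationMk 0 (OrdConf.single q) default,
    ⟨{ toContinuousMap := SemiSimplicialSpace.prodLift G fun f x t s => ?_,
       map_zero_left := SemiSimplicialSpace.realization_ind fun n x t => ?_,
       map_one_left := SemiSimplicialSpace.realization_ind fun n x t => ?_ }⟩⟩
  · exact realizationMk_cone_map g hg hq f x t s
  · exact realizationMk_cone_zero g hg hq x t
  · exact realizationMk_cone_one g hg hq x t

end confResolution

theorem contractibleSpace_realization_confResolution {T : Type} [TopologicalSpace T]
    {f : C(T, T)} (hf : (ContinuousMap.id T).HomotopicWith f fun g => Injective g)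
    (hsurj : ¬ Surjective f) : ContractibleSpace (confResolution T).Realization := by
  obtain ⟨q, hq⟩ := not_forall.1 hsurj
  have hinj : Injective f := by simpa using hf.some.prop 1
  obtain ⟨y, hy⟩ := nullhomotopic_realize_confResolutionMap f hinj hq
  rw [contractible_iff_id_nullhomotopic, ← realize_confResolutionMap_id]
  exact ⟨y, (homotopic_realize_confResolutionMap injective_id hinj hf).trans hy⟩

section radialPush

open Metric

variable {E : Type*} [NormedAddCommGroup E] [NormedSpace ℝ E] (c : E) (ε : ℝ)

/-- The identity off the ball of radius `ε`; for `t = 1` it pushes the punctured ball off the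
ball of radius `ε / 2`. -/
noncomputable def radialPush (t : ℝ) (v : E) : E :=
  c + (max ‖v - c‖ (‖v - c‖ + t * (ε - ‖v - c‖) / 2) / ‖v - c‖) • (v - c)

variable {c ε}

theorem norm_radialPush_sub {t : ℝ} {v : E} (hv : v ≠ c) :
    ‖radialPush c ε t v - c‖ = max ‖v - c‖ (‖v - c‖ + t * (ε - ‖v - c‖) / 2) := by
  have hr : 0 < ‖v - c‖ := norm_pos_iff.2 (sub_ne_zero.2 hv)
  rw [radialPush, add_sub_cancel_left, norm_smul, Real.norm_eq_abs,
    abs_of_nonneg (div_nonneg (hr.le.trans (le_max_left _ _)) hr.le), div_mul_cancel₀ _ hr.ne']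

theorem radialPush_of_max_eq {t : ℝ} {v : E}
    (h : max ‖v - c‖ (‖v - c‖ + t * (ε - ‖v - c‖) / 2) = ‖v - c‖) : radialPush c ε t v = v := by
  rcases eq_or_ne v c with rfl | hv
  · simp [radialPush]
  · rw [radialPush, h, div_self (norm_ne_zero_iff.2 (sub_ne_zero.2 hv)), one_smul,
      add_sub_cancel]

theorem radialPush_zero (v : E) : radialPush c ε 0 v = v :=
  radialPush_of_max_eq (by simp)

theorem radialPush_of_le_norm {t : ℝ} (ht : 0 ≤ t) {v : E} (hv : ε ≤ ‖v - c‖) :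
    radialPush c ε t v = v :=
  radialPush_of_max_eq (max_eq_left (by nlinarith))

theorem radialPush_eq_or_mem_closedBall {t : ℝ} (ht : t ∈ Icc (0 : ℝ) 1) (v : E) :
    radialPush c ε t v = v ∨ radialPush c ε t v ∈ closedBall c ε := by
  rcases eq_or_ne v c with rfl | hvc
  · simp [radialPush]
  rcases le_or_gt ε ‖v - c‖ with hv | hv
  · exact Or.inl (radialPush_of_le_norm ht.1 hv)
  · refine Or.inr (mem_closedBall_iff_norm.2 ?_)
    rw [norm_radialPush_sub hvc]
    exact max_le hv.le (by nlinarith [ht.1, ht.2])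

theorem radialPush_ne_center {t : ℝ} {v : E} (hv : v ≠ c) : radialPush c ε t v ≠ c := by
  intro h
  have := norm_radialPush_sub (ε := ε) (t := t) hv
  rw [h, sub_self, norm_zero] at this
  exact (norm_pos_iff.2 (sub_ne_zero.2 hv)).not_ge (this ▸ le_max_left _ _)

theorem half_lt_norm_radialPush_one_sub {v : E} (hv : v ≠ c) :
    ε / 2 < ‖radialPush c ε 1 v - c‖ := by
  rw [norm_radialPush_sub hv]
  have hr : 0 < ‖v - c‖ := norm_pos_iff.2 (sub_ne_zero.2 hv)
  exact lt_max_of_lt_right (by linarith)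

theorem injOn_radialPush {t : ℝ} (ht : t < 2) : InjOn (radialPush c ε t) {c}ᶜ := by
  intro v hv w hw h
  have hmono : StrictMono fun r : ℝ => max r (r + t * (ε - r) / 2) := fun r s hrs =>
    max_lt (lt_max_of_lt_left hrs) (lt_max_of_lt_right (by nlinarith))
  have hnorm : ‖v - c‖ = ‖w - c‖ :=
    hmono.injective (by rw [← norm_radialPush_sub hv, ← norm_radialPush_sub hw, h])
  have hscal : max ‖v - c‖ (‖v - c‖ + t * (ε - ‖v - c‖) / 2) / ‖v - c‖ ≠ 0 :=
    div_ne_zero (ne_of_gt (lt_max_of_lt_left (norm_pos_iff.2 (sub_ne_zero.2 hv))))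
      (norm_ne_zero_iff.2 (sub_ne_zero.2 hv))
  rw [radialPush, radialPush, ← hnorm] at h
  exact sub_left_injective (smul_right_injective E hscal (add_left_cancel h))

theorem continuousOn_radialPush :
    ContinuousOn (fun p : ℝ × E => radialPush c ε p.1 p.2) {p | p.2 ≠ c} := by
  refine ContinuousOn.add continuousOn_const (ContinuousOn.smul ?_ (by fun_prop))
  refine ContinuousOn.div (by fun_prop) (by fun_prop) fun p hp => ?_
  exact norm_ne_zero_iff.2 (sub_ne_zero.2 hp)

end radialPush

theorem OpenPartialHomeomorph.apply_ne_of_ne_symm {X Y : Type*} [TopologicalSpace X]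
    [TopologicalSpace Y] (e : OpenPartialHomeomorph X Y) {x : X} {y : Y} (hx : x ∈ e.source)
    (hxy : x ≠ e.symm y) : e x ≠ y :=
  fun h => hxy (h ▸ (e.left_inv hx).symm)

section chartPush

open Metric

variable {S E : Type*} [TopologicalSpace S] [NormedAddCommGroup E] [NormedSpace ℝ E]
  (e : OpenPartialHomeomorph S E) (c : E) (ε : ℝ)

open Classical in
noncomputable def chartPush (t : ℝ) (x : S) : S :=
  if x ∈ e.source then e.symm (radialPush c ε t (e x)) else x

variable {e c ε}

theorem chartPush_of_mem {t : ℝ} {x : S} (hx : x ∈ e.source) :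
    chartPush e c ε t x = e.symm (radialPush c ε t (e x)) :=
  if_pos hx

theorem chartPush_of_notMem_source {t : ℝ} {x : S} (hx : x ∉ e.source) : chartPush e c ε t x = x :=
  if_neg hx

theorem chartPush_zero (x : S) : chartPush e c ε 0 x = x := by
  by_cases hx : x ∈ e.source
  · rw [chartPush_of_mem hx, radialPush_zero, e.left_inv hx]
  · exact chartPush_of_notMem_source hx

theorem chartPush_of_notMem {t : ℝ} (ht : 0 ≤ t) {x : S} (hx : x ∉ e.symm '' closedBall c ε) :
    chartPush e c ε t x = x := by
  by_cases hxs : x ∈ e.source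
  · have hfar : ε ≤ ‖e x - c‖ :=
      le_of_lt (not_le.1 fun h => hx ⟨e x, mem_closedBall_iff_norm.2 h, e.left_inv hxs⟩)
    rw [chartPush_of_mem hxs, radialPush_of_le_norm ht hfar, e.left_inv hxs]
  · exact chartPush_of_notMem_source hxs

theorem chartPush_eq_or_eq_symm {t : ℝ} (ht : t ∈ Icc (0 : ℝ) 1) {x : S} (hx : x ≠ e.symm c) :
    chartPush e c ε t x = x ∨ ∃ w ∈ closedBall c ε, w ≠ c ∧ chartPush e c ε t x = e.symm w := by
  by_cases hxs : x ∈ e.source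
  · rw [chartPush_of_mem hxs]
    rcases radialPush_eq_or_mem_closedBall ht (c := c) (ε := ε) (e x) with h | h
    · exact Or.inl (by rw [h, e.left_inv hxs])
    · exact Or.inr ⟨_, h, radialPush_ne_center (e.apply_ne_of_ne_symm hxs hx), rfl⟩
  · exact Or.inl (chartPush_of_notMem_source hxs)

variable (hε : closedBall c ε ⊆ e.target)
include hε

theorem radialPush_mem_target {t : ℝ} (ht : t ∈ Icc (0 : ℝ) 1) {v : E} (hv : v ∈ e.target) :
    radialPush c ε t v ∈ e.target := by
  rcases radialPush_eq_or_mem_closedBall ht v with h | h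
  · rwa [h]
  · exact hε h

theorem injOn_chartPush {t : ℝ} (ht : t ∈ Icc (0 : ℝ) 1) :
    InjOn (chartPush e c ε t) {e.symm c}ᶜ := by
  intro x hx y hy hxy
  by_cases hxs : x ∈ e.source <;> by_cases hys : y ∈ e.source
  · rw [chartPush_of_mem hxs, chartPush_of_mem hys] at hxy
    have hx' := e.apply_ne_of_ne_symm hxs hx
    have hy' := e.apply_ne_of_ne_symm hys hy
    have := e.symm.injOn (radialPush_mem_target hε ht (e.map_source hxs))
      (radialPush_mem_target hε ht (e.map_source hys)) hxy
    rw [← e.left_inv hxs, ← e.left_inv hys, injOn_radialPush (by linarith [ht.2]) hx' hy' this]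
  · rw [chartPush_of_mem hxs, chartPush_of_notMem_source hys] at hxy
    exact absurd (hxy ▸ e.map_target (radialPush_mem_target hε ht (e.map_source hxs))) hys
  · rw [chartPush_of_notMem_source hxs, chartPush_of_mem hys] at hxy
    exact absurd (hxy ▸ e.map_target (radialPush_mem_target hε ht (e.map_source hys))) hxs
  · rwa [chartPush_of_notMem_source hxs, chartPush_of_notMem_source hys] at hxy

theorem chartPush_one_ne {x : S} (hx : x ≠ e.symm c) {w : E} (hw : w ∈ e.target)
    (hwc : ‖w - c‖ = ε / 2) : chartPush e c ε 1 x ≠ e.symm w := by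
  by_cases hxs : x ∈ e.source
  · rw [chartPush_of_mem hxs]
    intro h
    have := e.symm.injOn (radialPush_mem_target hε ⟨zero_le_one, le_rfl⟩ (e.map_source hxs)) hw h
    have hlt := half_lt_norm_radialPush_one_sub (ε := ε) (e.apply_ne_of_ne_symm hxs hx)
    rw [this, hwc] at hlt
    exact lt_irrefl _ hlt
  · rw [chartPush_of_notMem_source hxs]
    exact fun h => hxs (h ▸ e.map_target hw)

theorem continuousOn_chartPush (hK : IsClosed (e.symm '' closedBall c ε)) :
    ContinuousOn (fun p : ℝ × S => chartPush e c ε p.1 p.2) (Icc 0 1 ×ˢ {e.symm c}ᶜ) := by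
  refine continuousOn_of_locally_continuousOn fun p hp => ?_
  by_cases hps : p.2 ∈ e.source
  · refine ⟨univ ×ˢ e.source, isOpen_univ.prod e.open_source, ⟨trivial, hps⟩, ?_⟩
    have hpush : ContinuousOn (fun q : ℝ × S => radialPush c ε q.1 (e q.2))
        (Icc 0 1 ×ˢ {e.symm c}ᶜ ∩ univ ×ˢ e.source) :=
      ContinuousOn.comp (f := fun q : ℝ × S => (q.1, e q.2)) continuousOn_radialPush
        (continuousOn_fst.prodMk (e.continuousOn.comp continuousOn_snd fun q hq => hq.2.2))
        fun q hq => e.apply_ne_of_ne_symm hq.2.2 hq.1.2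
    refine (e.continuousOn_symm.comp hpush fun q hq => ?_).congr fun q hq => ?_
    · exact radialPush_mem_target hε hq.1.1 (e.map_source hq.2.2)
    · exact chartPush_of_mem hq.2.2
  · refine ⟨univ ×ˢ (e.symm '' closedBall c ε)ᶜ, isOpen_univ.prod hK.isOpen_compl,
      ⟨trivial, fun ⟨w, hw, hwp⟩ => hps (hwp ▸ e.map_target (hε hw))⟩, ?_⟩
    exact continuousOn_snd.congr fun q hq => chartPush_of_notMem hq.1.1.1 hq.2.2

end chartPush

section surface

open Metric

theorem exists_closedBall_chartAt_symm_notMem {S E : Type*} [TopologicalSpace S] [T1Space S]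
    [PseudoMetricSpace E] [ChartedSpace E S] (A : Finset S) (a : S) :
    ∃ ε > 0, closedBall (chartAt E a a) ε ⊆ (chartAt E a).target ∧
      ∀ w ∈ closedBall (chartAt E a a) ε, w ≠ chartAt E a a → (chartAt E a).symm w ∉ A := by
  set e := chartAt E a
  have hopen : IsOpen (e.target ∩ e.symm ⁻¹' ((A : Set S) \ {a})ᶜ) :=
    e.isOpen_inter_preimage_symm (A.finite_toSet.sdiff.isClosed.isOpen_compl)
  have hmem : e a ∈ e.target ∩ e.symm ⁻¹' ((A : Set S) \ {a})ᶜ :=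
    ⟨e.map_source (mem_chart_source E a), by simp [e.left_inv (mem_chart_source E a)]⟩
  obtain ⟨δ, hδ, hball⟩ := Metric.isOpen_iff.1 hopen _ hmem
  refine ⟨δ / 2, half_pos hδ, fun w hw => (hball (closedBall_subset_ball (half_lt_self hδ) hw)).1,
    fun w hw hwa hwA => ?_⟩
  have hw' := hball (closedBall_subset_ball (half_lt_self hδ) hw)
  have hne : e.symm w ≠ a := fun h => hwa (by rw [← h, e.right_inv hw'.1])
  exact hw'.2 ⟨hwA, hne⟩

theorem exists_homotopicWith_injective_not_surjective {S : Type*} [TopologicalSpace S]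
    [T2Space S] (E : Type*) [NormedAddCommGroup E] [NormedSpace ℝ E] [ProperSpace E] [Nontrivial E]
    [ChartedSpace E S] (A : Finset S) (hA : A.Nonempty) :
    ∃ f : C({x : S // x ∉ A}, {x : S // x ∉ A}),
      (ContinuousMap.id _).HomotopicWith f (fun g => Injective g) ∧ ¬ Surjective f := by
  obtain ⟨a, ha⟩ := hA
  set e := chartAt E a
  obtain ⟨ε, hε, hball, havoid⟩ := exists_closedBall_chartAt_symm_notMem (E := E) A a
  have hK : IsClosed (e.symm '' closedBall (e a) ε) :=
    ((isCompact_closedBall _ ε).image_of_continuousOn (e.continuousOn_symm.mono hball)).isClosed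
  have hne (x : {x : S // x ∉ A}) : x.1 ≠ e.symm (e a) := by
    rw [e.left_inv (mem_chart_source E a)]
    exact fun h => x.2 (h ▸ ha)
  have hstay (t : unitInterval) (x : {x : S // x ∉ A}) : chartPush e (e a) ε t x.1 ∉ A := by
    rcases chartPush_eq_or_eq_symm t.2 (hne x) with h | ⟨w, hw, hwa, h⟩
    · rw [h]; exact x.2
    · rw [h]; exact havoid w hw hwa
  let F : C(unitInterval × {x : S // x ∉ A}, {x : S // x ∉ A}) :=
    ⟨fun p => ⟨chartPush e (e a) ε p.1 p.2.1, hstay p.1 p.2⟩,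
      ((continuousOn_chartPush hball hK).comp_continuous
        ((continuous_subtype_val.comp continuous_fst).prodMk
          (continuous_subtype_val.comp continuous_snd)) fun p => ⟨p.1.2, hne p.2⟩).subtype_mk _⟩
  obtain ⟨u, hu⟩ := exists_norm_eq E (half_pos hε).le
  set w := e a + u
  have hw : ‖w - e a‖ = ε / 2 := by rw [add_sub_cancel_left, hu]
  have hw_mem : w ∈ closedBall (e a) ε := mem_closedBall_iff_norm.2 (by linarith)
  have hw_ne : w ≠ e a := fun h => by rw [h, sub_self, norm_zero] at hw; linarith
  let H : (ContinuousMap.id _).HomotopyWith (F.curry 1) fun g => Injective g :=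
    { toContinuousMap := F
      map_zero_left x := Subtype.ext (chartPush_zero x.1)
      map_one_left _ := rfl
      prop' t x y hxy := Subtype.ext <|
        injOn_chartPush hball t.2 (hne x) (hne y) (congrArg Subtype.val hxy) }
  refine ⟨F.curry 1, ⟨H⟩, fun hsurj => ?_⟩
  obtain ⟨x, hx⟩ := hsurj ⟨e.symm w, havoid w hw_mem hw_ne⟩
  exact chartPush_one_ne hball (hne x) (hball hw_mem) hw (congrArg Subtype.val hx)

end surface

theorem confResolution_realization_contractible_general
    (S : Type) [TopologicalSpace S] [T2Space S]
    [ChartedSpace (EuclideanSpace ℝ (Fin 2)) S]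
    (A : Finset S) (hA : A.Nonempty) :
    ContractibleSpace (confResolution {x : S // x ∉ A}).Realization := by
  obtain ⟨f, hf, hsurj⟩ :=
    exists_homotopicWith_injective_not_surjective (EuclideanSpace ℝ (Fin 2)) A hA
  exact contractibleSpace_realization_confResolution hf hsurj

theorem confResolution_realization_contractible
    (S : Type) [TopologicalSpace S] [T2Space S] [SecondCountableTopology S]
    [ChartedSpace (EuclideanSpace ℝ (Fin 2)) S]
    (A : Finset S) (hA : A.Nonempty) [ConnectedSpace {x : S // x ∉ A}] :
    ContractibleSpace (confResolution {x : S // x ∉ A}).Realization :=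
  confResolution_realization_contractible_general S A hA
end

section
/- Fix integers ξ ≥ 1 and n ≥ 1. For p ≥ 0 let C_p be the free abelian group on the set of admissible orderings of the multiset {0^ξ, 1^ξ, …, p^ξ}, let f_i: C_p → C_{p−1} (0 ≤ i ≤ p) be the map that deletes all occurrences of i from a sequence and subtracts 1 from every entry greater than i, let d = Σ_{j=0}^{p} (−1)^j f_j: C_p → C_{p−1}, and let D: C_p → C_{p+1} be the map that adds 1 to every entry of a sequence and prepends ξ zeros. Then D∘d + d∘D = id on C_p for 0 ≤ p ≤ n − ξ. -/
/-! ## Admissible orderings of the multiset `{0^ξ, …, p^ξ}` and the chain complex of the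
quotient of the fern complex -/

/-- A list of natural numbers is an admissible ordering of the multiset `{0^ξ, …, p^ξ}` if
it has length `(p+1)·ξ`, every value `v ≤ p` occurs exactly `ξ` times, no other value
occurs, and for `i < j` the first occurrence of `i` precedes the first occurrence of `j`. -/
def AdmissibleList (ξ p : ℕ) (l : List ℕ) : Prop :=
  l.length = (p + 1) * ξ ∧
  (∀ v, v ≤ p → l.count v = ξ) ∧
  (∀ v ∈ l, v ≤ p) ∧
  ∀ i j, i < j → j ≤ p → l.idxOf i < l.idxOf j

/-- Deletion of all occurrences of the value `i`, shifting all larger values down by one: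
the `i`-th face map on orderings. -/
def faceList (i : ℕ) (l : List ℕ) : List ℕ :=
  (l.filter (fun v => v ≠ i)).map (fun v => if i < v then v - 1 else v)

/-- Prepending `ξ` zeroes after shifting all values up by one: the degeneracy-style
operator `D` on orderings. -/
def upList (ξ : ℕ) (l : List ℕ) : List ℕ :=
  List.replicate ξ 0 ++ l.map (· + 1)

/-- The `i`-th face map on the free abelian group on orderings. -/
noncomputable def faceMap (i : ℕ) : (List ℕ →₀ ℤ) →ₗ[ℤ] (List ℕ →₀ ℤ) :=
  Finsupp.lmapDomain ℤ ℤ (faceList i)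

/-- The boundary map `d = Σ_{j=0}^{p} (−1)^j f_j` out of degree-`p` chains. -/
noncomputable def boundaryMap (p : ℕ) : (List ℕ →₀ ℤ) →ₗ[ℤ] (List ℕ →₀ ℤ) :=
  ∑ i ∈ Finset.range (p + 1), ((-1 : ℤ) ^ i) • faceMap i

/-- The operator `D` on the free abelian group on orderings. -/
noncomputable def upMap (ξ : ℕ) : (List ℕ →₀ ℤ) →ₗ[ℤ] (List ℕ →₀ ℤ) :=
  Finsupp.lmapDomain ℤ ℤ (upList ξ)

/-- `C_p`: the free abelian group on the admissible orderings of `{0^ξ, …, p^ξ}`, realised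
as the span of the corresponding basis vectors inside the free abelian group on all lists. -/
noncomputable def admSpan (ξ p : ℕ) : Submodule ℤ (List ℕ →₀ ℤ) :=
  Submodule.span ℤ ((fun l => Finsupp.single l (1 : ℤ)) '' {l | AdmissibleList ξ p l})

/-! `D` is a contracting homotopy because it is a "cone" operator on the face maps:
the new minimal value `0` is deleted by `f₀ ∘ D = id`, and for `i ≥ 0` deleting `i + 1`
commutes with `D` as `f_{i+1} ∘ D = D ∘ f_i`. In `d ∘ D` the first relation contributes the
identity and the others contribute `-D ∘ d`, by the usual sign shift. -/

lemma faceList_zero_upList (ξ : ℕ) (l : List ℕ) : faceList 0 (upList ξ l) = l := by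
  have hshift : ((fun v => if 0 < v then v - 1 else v) ∘ (· + 1)) = id := by
    ext v; simp
  simp only [faceList, upList, List.filter_append, List.filter_map, List.map_append,
    List.map_map]
  rw [List.filter_eq_nil_iff.mpr (by simp), List.filter_eq_self.mpr (by simp), hshift,
    List.map_id]
  simp

lemma faceList_succ_upList (ξ i : ℕ) (l : List ℕ) :
    faceList (i + 1) (upList ξ l) = upList ξ (faceList i l) := by
  simp only [faceList, upList, List.filter_append, List.filter_map, List.map_append,
    List.map_map]
  rw [List.filter_eq_self.mpr (by simp)]
  congr 1
  · simp
  · congr 1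
    · ext v : 1
      simp only [Function.comp_apply]
      split_ifs <;> omega
    · congr 1
      ext v
      simp

lemma faceMap_zero_comp_upMap (ξ : ℕ) : faceMap 0 ∘ₗ upMap ξ = LinearMap.id := by
  rw [faceMap, upMap, ← Finsupp.lmapDomain_comp, ← Finsupp.lmapDomain_id]
  exact congrArg _ (funext (faceList_zero_upList ξ))

lemma faceMap_succ_comp_upMap (ξ i : ℕ) :
    faceMap (i + 1) ∘ₗ upMap ξ = upMap ξ ∘ₗ faceMap i := by
  rw [faceMap, faceMap, upMap, ← Finsupp.lmapDomain_comp, ← Finsupp.lmapDomain_comp]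
  exact congrArg _ (funext (faceList_succ_upList ξ i))

lemma boundaryMap_succ_comp_upMap (ξ p : ℕ) :
    boundaryMap (p + 1) ∘ₗ upMap ξ = LinearMap.id - upMap ξ ∘ₗ boundaryMap p := by
  simp only [boundaryMap, ← Module.End.mul_eq_comp, Finset.sum_mul, Finset.mul_sum,
    smul_mul_assoc, mul_smul_comm]
  rw [Finset.sum_range_succ', Module.End.mul_eq_comp, faceMap_zero_comp_upMap]
  simp only [Module.End.mul_eq_comp, faceMap_succ_comp_upMap, pow_succ, mul_neg_one, neg_smul,
    Finset.sum_neg_distrib, pow_zero, one_smul]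
  abel

theorem chain_nullhomotopy_general (ξ : ℕ) (p : ℕ) (x : List ℕ →₀ ℤ) :
    upMap ξ (boundaryMap p x) + boundaryMap (p + 1) (upMap ξ x) = x := by
  have h := LinearMap.congr_fun (boundaryMap_succ_comp_upMap ξ p) x
  rw [LinearMap.comp_apply, LinearMap.sub_apply, LinearMap.comp_apply] at h
  rw [h, LinearMap.id_apply]
  abel

theorem chain_nullhomotopy (ξ n : ℕ) (hξ : 1 ≤ ξ) (hn : 1 ≤ n) (p : ℕ) (hp : p ≤ n - ξ)
    (x : List ℕ →₀ ℤ) (hx : x ∈ admSpan ξ p) :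
    upMap ξ (boundaryMap p x) + boundaryMap (p + 1) (upMap ξ x) = x :=
  chain_nullhomotopy_general ξ p x
end
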